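/- arXiv:2210.05640 — 3 statements merged into one kernel-verified Lean document; each statement's English description precedes it below -/
import Mathlib

section
/- (Infinite biproduct recognition) Let D be a preadditive category in which every object is a filtered colimit of compact objects. Suppose given πᵢ : Y → Yᵢ and σᵢ : Yᵢ → Y (i ranging over an arbitrary index set I) such that (i) πᵢ∘σⱼ = δᵢⱼ id; (ii) for each compact K, Hom(K, Yᵢ) = 0 for all but finitely many i; (iii) for each compact K and each f : K → Y, f = Σᵢ σᵢ∘πᵢ∘f. Then the maps exhibit Y as both the product and the coproduct of the Yᵢ. -/
/-!
Against a compact object `K`, conditions (i)–(iii) say exactly that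
`Hom(K, Y) → ∏ᵢ Hom(K, Yᵢ)` is bijective, with inverse `(fᵢ) ↦ Σᵢ σᵢ ∘ fᵢ` (a finite sum
by (ii)). Since every object is a filtered colimit of compact objects, the universal property
of the product follows by gluing along such a presentation. For the coproduct, present `Y`
itself as a filtered colimit of compacts `K_j → Y`: a map `Y → T` with components `fᵢ` must
restrict on `K_j` to the finite sum `Σᵢ fᵢ ∘ πᵢ ∘ ι_j`; these restrictions are compatible,
and the glued map has components `fᵢ` because every map from a compact object to `Yᵢ`,
followed by `σᵢ`, factors through some `K_j`.
-/

open CategoryTheory CategoryTheory.Limits Opposite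

abbrev IsCompactObj {D : Type*} [Category D] (K : D) : Prop :=
  Nonempty (PreservesFilteredColimits (coyoneda.obj (op K)))

lemma IsCompactObj.exists_hom_of_isColimit {D : Type u} [Category.{v} D] {K : D}
    (hK : IsCompactObj K) {J : Type v} [SmallCategory J] [IsFiltered J] {F : J ⥤ D}
    {c : Cocone F} (hc : IsColimit c) (f : K ⟶ c.pt) :
    ∃ (j : J) (p : K ⟶ F.obj j), p ≫ c.ι.app j = f :=
  have := isFinitelyPresentable_iff_preservesFilteredColimits.mpr hK.some
  IsFinitelyPresentable.exists_hom_of_isColimit hc f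

def IsCompactlyGeneratedCategory (D : Type u) [Category.{v} D] : Prop :=
  ∀ Z : D, ∃ (J : Type v) (_ : SmallCategory J) (_ : IsFiltered J)
    (F : J ⥤ D) (c : Cocone F), Nonempty (IsColimit c) ∧
      (∀ j : J, IsCompactObj (F.obj j)) ∧ c.pt = Z

namespace IsCompactlyGeneratedCategory

variable {D : Type u} [Category.{v} D]

lemma hom_ext (hD : IsCompactlyGeneratedCategory D) {T Z : D} {g g' : T ⟶ Z}
    (h : ∀ K : D, IsCompactObj K → ∀ k : K ⟶ T, k ≫ g = k ≫ g') : g = g' := by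
  obtain ⟨J, _, _, F, c, ⟨hc⟩, hF, rfl⟩ := hD T
  exact hc.hom_ext fun j => h _ (hF j) _

noncomputable def isLimitOfExistsUnique (hD : IsCompactlyGeneratedCategory D) {J : Type*}
    [Category J] {G : J ⥤ D} (t : Cone G)
    (ht : ∀ s : Cone G, IsCompactObj s.pt →
      ∃! l : s.pt ⟶ t.pt, ∀ j, l ≫ t.π.app j = s.π.app j) :
    IsLimit t := by
  refine IsLimit.ofExistsUnique fun ⟨T, πT⟩ => ?_
  obtain ⟨J', _, _, F, c, ⟨hc⟩, hF, rfl⟩ := hD T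
  let s : Cone G := ⟨c.pt, πT⟩
  change ∃! l : s.pt ⟶ t.pt, ∀ j, l ≫ t.π.app j = s.π.app j
  choose l hl hl_uniq using fun j => ht (s.extend (c.ι.app j)) (hF j)
  let d : Cocone F :=
    { pt := t.pt
      ι := { app := l
             naturality := fun j j' φ => by
               simp only [Functor.const_obj_obj, Functor.const_obj_map, Category.comp_id]
               refine hl_uniq j _ fun x => ?_
               rw [Category.assoc, hl j' x]
               exact c.w_assoc φ _ } }
  have hfac : ∀ x, hc.desc d ≫ t.π.app x = s.π.app x := fun x =>
    hc.hom_ext fun j => (hc.fac_assoc d j _).trans (hl j x)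
  refine ⟨hc.desc d, hfac, fun m hm => hD.hom_ext fun K hK k => ?_⟩
  obtain ⟨_, -, huniq⟩ := ht (s.extend k) hK
  exact (huniq _ fun x => by rw [Category.assoc, hm]; rfl).trans
    (huniq _ fun x => by rw [Category.assoc, hfac]; rfl).symm

end IsCompactlyGeneratedCategory

section BiproductRecognition

variable {D : Type u} [Category.{v} D] [Preadditive D] {I : Type w} {X : I → D} {Y : D}
  {σ : ∀ i, X i ⟶ Y} {π : ∀ i, Y ⟶ X i}

lemma sum_comp_π (hσπ : ∀ i, σ i ≫ π i = 𝟙 (X i)) (hσπ_ne : ∀ i j, i ≠ j → σ i ≫ π j = 0)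
    {K : D} {S : Finset I} {t : ∀ i, K ⟶ X i} (ht : ∀ i ∉ S, t i = 0) (k : I) :
    (∑ i ∈ S, t i ≫ σ i) ≫ π k = t k := by
  rw [Preadditive.sum_comp, Finset.sum_eq_single k
    (fun i _ hik => by rw [Category.assoc, hσπ_ne i k hik, comp_zero])
    (fun hk => by rw [ht k hk, zero_comp, zero_comp]), Category.assoc, hσπ, Category.comp_id]

lemma hom_ext_of_comp_π {K : D}
    (hsum : ∀ f : K ⟶ Y, ∃ S : Finset I, f = ∑ i ∈ S, f ≫ π i ≫ σ i)
    {g g' : K ⟶ Y} (h : ∀ i, g ≫ π i = g' ≫ π i) : g = g' := by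
  obtain ⟨S, hS⟩ := hsum (g - g')
  rw [← sub_eq_zero, hS]
  refine Finset.sum_eq_zero fun i _ => ?_
  rw [← Category.assoc, Preadditive.sub_comp, h, sub_self, zero_comp]

lemma existsUnique_comp_π_eq (hσπ : ∀ i, σ i ≫ π i = 𝟙 (X i))
    (hσπ_ne : ∀ i j, i ≠ j → σ i ≫ π j = 0) {K : D}
    (hfin : ∃ S : Finset I, ∀ i ∉ S, ∀ x : K ⟶ X i, x = 0)
    (hsum : ∀ f : K ⟶ Y, ∃ S : Finset I, f = ∑ i ∈ S, f ≫ π i ≫ σ i)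
    (f : ∀ i, K ⟶ X i) : ∃! g : K ⟶ Y, ∀ i, g ≫ π i = f i := by
  obtain ⟨S, hS⟩ := hfin
  refine ⟨∑ i ∈ S, f i ≫ σ i, fun k => ?_, fun g hg => hom_ext_of_comp_π hsum fun k => ?_⟩
  · exact sum_comp_π hσπ hσπ_ne (fun i hi => hS i hi _) k
  · rw [hg, sum_comp_π hσπ hσπ_ne (fun i hi => hS i hi _) k]

lemma hom_ext_of_σ_comp (hD : IsCompactlyGeneratedCategory D)
    (hsum : ∀ K : D, IsCompactObj K → ∀ f : K ⟶ Y,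
      ∃ S : Finset I, f = ∑ i ∈ S, f ≫ π i ≫ σ i)
    {T : D} {g g' : Y ⟶ T} (h : ∀ i, σ i ≫ g = σ i ≫ g') : g = g' :=
  hD.hom_ext fun K hK k => by
    obtain ⟨S, hS⟩ := hsum K hK k
    rw [hS]
    simp only [Preadditive.sum_comp, Category.assoc, h]

lemma exists_σ_comp_eq (hD : IsCompactlyGeneratedCategory D)
    (hσπ : ∀ i, σ i ≫ π i = 𝟙 (X i)) (hσπ_ne : ∀ i j, i ≠ j → σ i ≫ π j = 0)
    (hfin : ∀ K : D, IsCompactObj K → ∃ S : Finset I, ∀ i ∉ S, ∀ x : K ⟶ X i, x = 0)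
    {T : D} (f : ∀ i, X i ⟶ T) : ∃ g : Y ⟶ T, ∀ i, σ i ≫ g = f i := by
  obtain ⟨J, _, _, F, c, ⟨hc⟩, hF, rfl⟩ := hD Y
  choose S hS using fun j => hfin _ (hF j)
  let d : Cocone F :=
    { pt := T
      ι := { app := fun j => ∑ i ∈ S j, (c.ι.app j ≫ π i) ≫ f i
             naturality := fun j j' φ => by
               have hw : ∀ i, F.map φ ≫ (c.ι.app j' ≫ π i) ≫ f i = (c.ι.app j ≫ π i) ≫ f i :=
                 fun i => by rw [← Category.assoc, ← Category.assoc, c.w]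
               simp only [Functor.const_obj_obj, Functor.const_obj_map, Category.comp_id,
                 Preadditive.comp_sum, hw]
               refine Finset.sum_congr_of_eq_on_inter
                 (fun i _ hi => by rw [hS j i hi (c.ι.app j ≫ π i), zero_comp])
                 (fun i _ hi => ?_) fun _ _ _ => rfl
               rw [← c.w φ]
               simp only [Category.assoc, reassoc_of% (hS j' i hi (c.ι.app j' ≫ π i)),
                 zero_comp, comp_zero] } }
  refine ⟨hc.desc d, fun i => hD.hom_ext fun K hK x => ?_⟩
  -- `x ≫ σ i` factors through a stage, where `hc.desc d` is the defining finite sum.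
  obtain ⟨j, p, hp⟩ := hK.exists_hom_of_isColimit hc (x ≫ σ i)
  calc x ≫ σ i ≫ hc.desc d
      = ∑ i' ∈ S j, (x ≫ σ i ≫ π i') ≫ f i' := by
        rw [← Category.assoc, ← hp, Category.assoc, hc.fac]
        change p ≫ ∑ i' ∈ S j, (c.ι.app j ≫ π i') ≫ f i' = _
        simp only [Preadditive.comp_sum, ← Category.assoc, ← hp]
    _ = x ≫ f i := by
        rw [Finset.sum_eq_single i
          (fun i' _ hi' => by rw [hσπ_ne i i' hi'.symm, comp_zero, zero_comp])
          (fun hi => by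
            rw [← Category.assoc, ← hp]
            simp only [Category.assoc, reassoc_of% (hS j i hi (c.ι.app j ≫ π i)),
              zero_comp, comp_zero]),
          hσπ, Category.comp_id]

noncomputable def isLimitFanMk (hD : IsCompactlyGeneratedCategory D)
    (hσπ : ∀ i, σ i ≫ π i = 𝟙 (X i)) (hσπ_ne : ∀ i j, i ≠ j → σ i ≫ π j = 0)
    (hfin : ∀ K : D, IsCompactObj K → ∃ S : Finset I, ∀ i ∉ S, ∀ x : K ⟶ X i, x = 0)
    (hsum : ∀ K : D, IsCompactObj K → ∀ f : K ⟶ Y,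
      ∃ S : Finset I, f = ∑ i ∈ S, f ≫ π i ≫ σ i) :
    IsLimit (Fan.mk Y π) :=
  hD.isLimitOfExistsUnique _ fun s hs => by
    obtain ⟨g, hg, huniq⟩ :=
      existsUnique_comp_π_eq hσπ hσπ_ne (hfin _ hs) (hsum _ hs) fun i => s.π.app ⟨i⟩
    exact ⟨g, fun ⟨i⟩ => hg i, fun g' hg' => huniq g' fun i => hg' ⟨i⟩⟩

noncomputable def isColimitCofanMk (hD : IsCompactlyGeneratedCategory D)
    (hσπ : ∀ i, σ i ≫ π i = 𝟙 (X i)) (hσπ_ne : ∀ i j, i ≠ j → σ i ≫ π j = 0)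
    (hfin : ∀ K : D, IsCompactObj K → ∃ S : Finset I, ∀ i ∉ S, ∀ x : K ⟶ X i, x = 0)
    (hsum : ∀ K : D, IsCompactObj K → ∀ f : K ⟶ Y,
      ∃ S : Finset I, f = ∑ i ∈ S, f ≫ π i ≫ σ i) :
    IsColimit (Cofan.mk Y σ) :=
  Cofan.IsColimit.mk _ (fun t => (exists_σ_comp_eq hD hσπ hσπ_ne hfin t.inj).choose)
    (fun t => (exists_σ_comp_eq hD hσπ hσπ_ne hfin t.inj).choose_spec)
    (fun t _ hm => hom_ext_of_σ_comp hD hsum fun i =>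
      (hm i).trans ((exists_σ_comp_eq hD hσπ hσπ_ne hfin t.inj).choose_spec i).symm)

end BiproductRecognition

theorem statement7 {D : Type u} [Category.{v} D] [Preadditive D]
    -- every object is a filtered colimit of compact objects:
    (hgen : ∀ Z : D, ∃ (J : Type v) (_ : SmallCategory J) (_ : IsFiltered J)
      (F : J ⥤ D) (c : Cocone F), Nonempty (IsColimit c) ∧
        (∀ j : J, IsCompactObj (F.obj j)) ∧ c.pt = Z)
    {I : Type w} (X : I → D) (Y : D) (σ : ∀ i, X i ⟶ Y) (π : ∀ i, Y ⟶ X i)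
    (h1a : ∀ i, σ i ≫ π i = 𝟙 (X i))
    (h1b : ∀ i j, i ≠ j → σ i ≫ π j = 0)
    (h2 : ∀ K : D, IsCompactObj K → {i : I | ∃ f : K ⟶ X i, f ≠ 0}.Finite)
    (h3 : ∀ K : D, IsCompactObj K → ∀ f : K ⟶ Y,
      ∃ S : Finset I, f = ∑ i ∈ S, f ≫ π i ≫ σ i) :
    Nonempty (IsLimit (Fan.mk Y π)) ∧ Nonempty (IsColimit (Cofan.mk Y σ)) := by
  have hfin : ∀ K : D, IsCompactObj K → ∃ S : Finset I, ∀ i ∉ S, ∀ x : K ⟶ X i, x = 0 :=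
    fun K hK => ⟨(h2 K hK).toFinset, fun i hi x =>
      by_contra fun hx => hi ((h2 K hK).mem_toFinset.2 ⟨x, hx⟩)⟩
  exact ⟨⟨isLimitFanMk hgen h1a h1b hfin h3⟩, ⟨isColimitCofanMk hgen h1a h1b hfin h3⟩⟩
end

section
/- Let e ∈ K[Sₙ] be the symmetrizing idempotent (char K = 0) acting on A = K[x₁,…,xₙ]/(xᵢ²) via the signed permutation action (permuting s_i = (-1)^{i-1}x_i). Then the image e·A equals the invariant subalgebra K[z]/(z^{n+1}) where z = Σ s_i, and e acts as the identity on this subalgebra; in particular e·A has dimension n+1 over K. -/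
/-!
The averaging operator `e` kills the ideal `(xᵢ²)` because every signed permutation preserves
it, and it fixes every polynomial in the invariant element `z`; hence `K[z] ⊆ e·A`.  Conversely
`e·A` is spanned by the images `e(s_S)` of the squarefree monomials, and `e(s_S)` only depends
on `|S|` since `Sₙ` acts transitively on the subsets of a given size, so `dim e·A ≤ n + 1`.
Finally `z^(n+1) = 0` while `z^n = n! · s₁ ⋯ sₙ ≠ 0`, so the minimal polynomial of `z` is
`X^(n+1)` and `dim K[z] = n + 1`; the two bounds force `e·A = K[z]`.
-/

open MvPolynomial

noncomputable def sqIdeal (K : Type*) [CommRing K] (n : ℕ) : Ideal (MvPolynomial (Fin n) K) :=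
  Ideal.span (Set.range fun i : Fin n => (MvPolynomial.X i) ^ 2)

abbrev Asq (K : Type*) [CommRing K] (n : ℕ) : Type _ :=
  MvPolynomial (Fin n) K ⧸ sqIdeal K n

noncomputable def sVar (K : Type*) [CommRing K] (n : ℕ) (i : Fin n) : Asq K n :=
  Ideal.Quotient.mk (sqIdeal K n) (((-1 : MvPolynomial (Fin n) K) ^ (i : ℕ)) * MvPolynomial.X i)

noncomputable def zAlt (K : Type*) [CommRing K] (n : ℕ) : Asq K n := ∑ i : Fin n, sVar K n i

/-- The signed permutation action on the polynomial ring: `w` sends `s_i` to `s_{w(i)}`,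
i.e. `x_i ↦ (-1)^{i + w(i)} x_{w(i)}`. -/
noncomputable def sgnAct (K : Type*) [CommRing K] (n : ℕ) (w : Equiv.Perm (Fin n)) :
    MvPolynomial (Fin n) K →ₐ[K] MvPolynomial (Fin n) K :=
  MvPolynomial.aeval fun i : Fin n =>
    ((-1 : MvPolynomial (Fin n) K) ^ ((i : ℕ) + ((w i : Fin n) : ℕ))) * MvPolynomial.X (w i)

/-- The symmetrizing idempotent `e = (1/n!) Σ_w w`, as a linear map
from representatives to `A` (composing with the surjection `mk` realizes `e : A → A`). -/
noncomputable def eLift (K : Type*) [Field K] (n : ℕ) :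
    MvPolynomial (Fin n) K →ₗ[K] Asq K n :=
  ((n.factorial : K)⁻¹) •
    ∑ w : Equiv.Perm (Fin n),
      (Ideal.Quotient.mkₐ K (sqIdeal K n)).toLinearMap.comp (sgnAct K n w).toLinearMap

open Finset

theorem add_pow_succ_of_sq_eq_zero {R : Type*} [CommRing R] {x : R} (hx : x ^ 2 = 0)
    (y : R) (m : ℕ) : (x + y) ^ (m + 1) = y ^ (m + 1) + (m + 1) * x * y ^ m := by
  induction m with
  | zero => ring
  | succ m ih =>
    rw [pow_succ, ih]
    push_cast
    linear_combination (m + 1) * y ^ m * hx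

section SquareZero

variable {ι R : Type*} [CommRing R] {f : ι → R}

theorem sum_pow_card_succ_eq_zero_of_sq_eq_zero (s : Finset ι) (hf : ∀ i ∈ s, f i ^ 2 = 0) :
    (∑ i ∈ s, f i) ^ (#s + 1) = 0 := by
  classical
  induction s using Finset.induction_on with
  | empty => simp
  | insert a s ha ih =>
    have hs := ih fun i hi => hf i (mem_insert_of_mem hi)
    rw [sum_insert ha, card_insert_of_notMem ha,
      add_pow_succ_of_sq_eq_zero (hf a (mem_insert_self a s)), pow_succ, hs]
    ring

theorem sum_pow_card_of_sq_eq_zero (s : Finset ι) (hf : ∀ i ∈ s, f i ^ 2 = 0) :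
    (∑ i ∈ s, f i) ^ #s = (#s).factorial * ∏ i ∈ s, f i := by
  classical
  induction s using Finset.induction_on with
  | empty => simp
  | insert a s ha ih =>
    have hf' : ∀ i ∈ s, f i ^ 2 = 0 := fun i hi => hf i (mem_insert_of_mem hi)
    rw [sum_insert ha, card_insert_of_notMem ha, prod_insert ha,
      add_pow_succ_of_sq_eq_zero (hf a (mem_insert_self a s)),
      sum_pow_card_succ_eq_zero_of_sq_eq_zero s hf', ih hf', Nat.factorial_succ]
    push_cast
    ring

end SquareZero

theorem minpoly_eq_X_pow_of_pow_eq_zero {K S : Type*} [Field K] [CommRing S] [Algebra K S]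
    {x : S} {n : ℕ} (hx : x ^ (n + 1) = 0) (hxn : x ^ n ≠ 0) :
    minpoly K x = Polynomial.X ^ (n + 1) := by
  have hint : IsIntegral K x := ⟨_, Polynomial.monic_X_pow (n + 1), by simp [hx]⟩
  obtain ⟨i, hi, hassoc⟩ := (dvd_prime_pow Polynomial.prime_X (n + 1)).1
    (minpoly.dvd K x (by simp [hx]))
  have hmin := Polynomial.eq_of_monic_of_associated (minpoly.monic hint)
    (Polynomial.monic_X_pow i) hassoc
  have hxi : x ^ i = 0 := by simpa [hmin] using minpoly.aeval K x
  obtain rfl : i = n + 1 := by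
    by_contra hne
    exact hxn (pow_eq_zero_of_le (by omega) hxi)
  exact hmin

theorem finrank_adjoin_of_pow_eq_zero {K S : Type*} [Field K] [CommRing S] [Algebra K S]
    {x : S} {n : ℕ} (hx : x ^ (n + 1) = 0) (hxn : x ^ n ≠ 0) :
    Module.finrank K (Algebra.adjoin K {x}) = n + 1 := by
  have hint : IsIntegral K x := ⟨_, Polynomial.monic_X_pow (n + 1), by simp [hx]⟩
  rw [(Algebra.adjoin.powerBasis hint).finrank, Algebra.adjoin.powerBasis_dim,
    minpoly_eq_X_pow_of_pow_eq_zero hx hxn, Polynomial.natDegree_X_pow]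

theorem Finset.exists_perm_image_eq {α : Type*} [DecidableEq α] {s t : Finset α}
    (h : #s = #t) : ∃ w : Equiv.Perm α, s.image w = t := by
  obtain ⟨w, hw⟩ := (Set.powersetCard.isPretransitive (n := #t)).exists_smul_eq
    (Set.powersetCard.ofCard h) (Set.powersetCard.ofCard rfl)
  exact ⟨w, by simpa [Finset.smul_finset_def] using congrArg Subtype.val hw⟩

section SignedPermutations

variable {K : Type*} [Field K] {n : ℕ}

noncomputable def sPoly (K : Type*) [Field K] (n : ℕ) (S : Finset (Fin n)) :
    MvPolynomial (Fin n) K :=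
  ∏ i ∈ S, (-1) ^ (i : ℕ) * X i

noncomputable def zPoly (K : Type*) [Field K] (n : ℕ) : MvPolynomial (Fin n) K :=
  ∑ i : Fin n, (-1) ^ (i : ℕ) * X i

theorem prod_X_eq_neg_one_pow_mul_sPoly (S : Finset (Fin n)) :
    ∏ i ∈ S, (X i : MvPolynomial (Fin n) K) = (-1) ^ (∑ i ∈ S, (i : ℕ)) * sPoly K n S := by
  rw [sPoly, prod_mul_distrib, prod_pow_eq_pow_sum, ← mul_assoc, ← pow_add, ← two_mul, pow_mul,
    neg_one_sq, one_pow, one_mul]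

theorem prod_X_eq_monomial (S : Finset (Fin n)) :
    ∏ i ∈ S, (X i : MvPolynomial (Fin n) K) = monomial (∑ i ∈ S, Finsupp.single i 1) 1 := by
  rw [monomial_sum_one]
  rfl

theorem monomial_one_mem_sqIdeal_iff {m : Fin n →₀ ℕ} :
    monomial m (1 : K) ∈ sqIdeal K n ↔ ∃ i, 2 ≤ m i := by
  have hspan : sqIdeal K n = Ideal.span ((fun s => monomial s (1 : K)) ''
      Set.range fun i : Fin n => Finsupp.single i 2) := by
    rw [sqIdeal, ← Set.range_comp]
    simp only [Function.comp_def, X_pow_eq_monomial]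
  simp [hspan, mem_ideal_span_monomial_image, Finsupp.single_le_iff]

theorem sVar_sq (i : Fin n) : sVar K n i ^ 2 = 0 := by
  rw [sVar, ← map_pow, Ideal.Quotient.eq_zero_iff_mem, mul_pow, ← pow_mul, mul_comm (i : ℕ),
    pow_mul, neg_one_sq, one_pow, one_mul]
  exact Ideal.subset_span ⟨i, rfl⟩

theorem zAlt_pow_succ : zAlt K n ^ (n + 1) = 0 := by
  simpa [zAlt] using sum_pow_card_succ_eq_zero_of_sq_eq_zero univ fun i _ => sVar_sq (K := K) i

theorem prod_sVar_ne_zero : ∏ i, sVar K n i ≠ 0 := by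
  have hprod : ∏ i, sVar K n i = Ideal.Quotient.mk (sqIdeal K n) (sPoly K n univ) := by
    simp [sVar, sPoly, map_prod]
  have hmono : monomial (∑ i : Fin n, Finsupp.single i 1) (1 : K) ∉ sqIdeal K n := by
    simp [monomial_one_mem_sqIdeal_iff, Finsupp.single_apply]
  rw [hprod]
  intro h0
  apply hmono
  rw [← prod_X_eq_monomial, prod_X_eq_neg_one_pow_mul_sPoly, ← Ideal.Quotient.eq_zero_iff_mem,
    map_mul, h0, mul_zero]

theorem zAlt_pow_self_ne_zero [CharZero K] : zAlt K n ^ n ≠ 0 := by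
  have hpow : zAlt K n ^ n = (n.factorial : K) • ∏ i, sVar K n i := by
    simpa [zAlt, Nat.cast_smul_eq_nsmul, nsmul_eq_mul] using
      sum_pow_card_of_sq_eq_zero univ fun i _ => sVar_sq (K := K) (n := n) i
  rw [hpow]
  exact smul_ne_zero (Nat.cast_ne_zero.2 n.factorial_ne_zero) prod_sVar_ne_zero

theorem finrank_adjoin_zAlt [CharZero K] :
    Module.finrank K (Algebra.adjoin K {zAlt K n}) = n + 1 :=
  finrank_adjoin_of_pow_eq_zero zAlt_pow_succ zAlt_pow_self_ne_zero

theorem sgnAct_neg_one_pow_mul_X (w : Equiv.Perm (Fin n)) (i : Fin n) :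
    sgnAct K n w ((-1) ^ (i : ℕ) * X i) = (-1) ^ (w i : ℕ) * X (w i) := by
  rw [sgnAct, map_mul, map_pow, map_neg, map_one, aeval_X, ← mul_assoc, ← pow_add,
    show (i : ℕ) + ((i : ℕ) + (w i : ℕ)) = (w i : ℕ) + 2 * (i : ℕ) by ring,
    pow_add, pow_mul, neg_one_sq, one_pow, mul_one]

theorem sgnAct_mul (u w : Equiv.Perm (Fin n)) :
    sgnAct K n (u * w) = (sgnAct K n u).comp (sgnAct K n w) := by
  refine MvPolynomial.algHom_ext fun i => ?_
  simp only [sgnAct, AlgHom.comp_apply, aeval_X, map_mul, map_pow, map_neg, map_one,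
    Equiv.Perm.coe_mul, Function.comp_apply]
  rw [← mul_assoc, ← pow_add,
    show (i : ℕ) + (w i : ℕ) + ((w i : ℕ) + (u (w i) : ℕ)) = (i + u (w i) : ℕ) + 2 * (w i : ℕ)
      by ring, pow_add _ _ (2 * _), pow_mul, neg_one_sq, one_pow, mul_one]

theorem sgnAct_sPoly (w : Equiv.Perm (Fin n)) (S : Finset (Fin n)) :
    sgnAct K n w (sPoly K n S) = sPoly K n (S.image w) := by
  simp only [sPoly, map_prod, sgnAct_neg_one_pow_mul_X]
  rw [prod_image fun a _ b _ h => w.injective h]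

theorem sgnAct_zPoly (w : Equiv.Perm (Fin n)) : sgnAct K n w (zPoly K n) = zPoly K n := by
  simp only [zPoly, map_sum, sgnAct_neg_one_pow_mul_X]
  exact Equiv.sum_comp w fun j => (-1) ^ (j : ℕ) * X j

theorem sgnAct_mem_sqIdeal (w : Equiv.Perm (Fin n)) {p : MvPolynomial (Fin n) K}
    (hp : p ∈ sqIdeal K n) : sgnAct K n w p ∈ sqIdeal K n := by
  suffices sqIdeal K n ≤ (sqIdeal K n).comap (sgnAct K n w) from this hp
  rw [sqIdeal, Ideal.span_le]
  rintro _ ⟨i, rfl⟩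
  have hsq : sgnAct K n w (X i ^ 2) = X (w i) ^ 2 := by
    rw [map_pow, sgnAct, aeval_X, mul_pow, ← pow_mul, mul_comm _ 2, pow_mul, neg_one_sq,
      one_pow, one_mul]
  rw [SetLike.mem_coe, Ideal.mem_comap, hsq]
  exact Ideal.subset_span ⟨w i, rfl⟩

theorem eLift_apply (p : MvPolynomial (Fin n) K) :
    eLift K n p = (n.factorial : K)⁻¹ •
      ∑ w : Equiv.Perm (Fin n), Ideal.Quotient.mk (sqIdeal K n) (sgnAct K n w p) := by
  simp [eLift, LinearMap.sum_apply]

theorem eLift_eq_zero_of_mem {p : MvPolynomial (Fin n) K} (hp : p ∈ sqIdeal K n) :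
    eLift K n p = 0 := by
  rw [eLift_apply, sum_eq_zero fun w _ =>
    Ideal.Quotient.eq_zero_iff_mem.2 (sgnAct_mem_sqIdeal w hp), smul_zero]

theorem eLift_eq_of_mk_eq {p q : MvPolynomial (Fin n) K}
    (h : Ideal.Quotient.mk (sqIdeal K n) p = Ideal.Quotient.mk (sqIdeal K n) q) :
    eLift K n p = eLift K n q :=
  sub_eq_zero.1 (by rw [← map_sub]; exact eLift_eq_zero_of_mem (Ideal.Quotient.eq.1 h))

theorem eLift_sgnAct (w : Equiv.Perm (Fin n)) (p : MvPolynomial (Fin n) K) :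
    eLift K n (sgnAct K n w p) = eLift K n p := by
  have hcomp (u : Equiv.Perm (Fin n)) :
      sgnAct K n u (sgnAct K n w p) = sgnAct K n (u * w) p := by
    rw [sgnAct_mul, AlgHom.comp_apply]
  simp only [eLift_apply, hcomp]
  rw [Fintype.sum_equiv (Equiv.mulRight w) (fun u => Ideal.Quotient.mk _ (sgnAct K n (u * w) p))
    (fun u => Ideal.Quotient.mk _ (sgnAct K n u p)) fun u => rfl]

theorem eLift_of_forall_sgnAct_eq [CharZero K] {q : MvPolynomial (Fin n) K}
    (hq : ∀ w, sgnAct K n w q = q) : eLift K n q = Ideal.Quotient.mk (sqIdeal K n) q := by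
  rw [eLift_apply]
  simp only [hq, sum_const, card_univ, Fintype.card_perm, Fintype.card_fin]
  rw [← Nat.cast_smul_eq_nsmul K, smul_smul,
    inv_mul_cancel₀ (Nat.cast_ne_zero.2 n.factorial_ne_zero), one_smul]

theorem eLift_eq_of_mem_adjoin [CharZero K] {a : Asq K n}
    (ha : a ∈ Algebra.adjoin K {zAlt K n}) {p : MvPolynomial (Fin n) K}
    (hp : Ideal.Quotient.mk (sqIdeal K n) p = a) : eLift K n p = a := by
  rw [Algebra.adjoin_singleton_eq_range_aeval] at ha
  obtain ⟨f, rfl⟩ := ha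
  have hmk : Ideal.Quotient.mkₐ K (sqIdeal K n) (Polynomial.aeval (zPoly K n) f) =
      Polynomial.aeval (zAlt K n) f := by
    rw [← Polynomial.aeval_algHom_apply, Ideal.Quotient.mkₐ_eq_mk]
    simp [zPoly, zAlt, sVar, map_sum]
  have hinv (w : Equiv.Perm (Fin n)) :
      sgnAct K n w (Polynomial.aeval (zPoly K n) f) = Polynomial.aeval (zPoly K n) f := by
    rw [← Polynomial.aeval_algHom_apply, sgnAct_zPoly]
  rw [eLift_eq_of_mk_eq (hp.trans hmk.symm), eLift_of_forall_sgnAct_eq hinv]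
  exact hmk

noncomputable def avgSPoly (K : Type*) [Field K] (n : ℕ) (k : Fin (n + 1)) : Asq K n :=
  eLift K n (sPoly K n (univ.map (Fin.castLEEmb k.is_le)))

theorem eLift_sPoly_eq_of_card_eq {S T : Finset (Fin n)} (h : #S = #T) :
    eLift K n (sPoly K n S) = eLift K n (sPoly K n T) := by
  obtain ⟨w, rfl⟩ := exists_perm_image_eq h
  rw [← sgnAct_sPoly, eLift_sgnAct]

theorem eLift_sPoly_mem_span (S : Finset (Fin n)) :
    eLift K n (sPoly K n S) ∈ Submodule.span K (Set.range (avgSPoly K n)) := by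
  have hk : #S < n + 1 := Nat.lt_succ_of_le ((card_le_univ S).trans_eq (Fintype.card_fin n))
  rw [eLift_sPoly_eq_of_card_eq (T := univ.map (Fin.castLEEmb (Fin.is_le ⟨#S, hk⟩))) (by simp)]
  exact Submodule.subset_span ⟨⟨#S, hk⟩, rfl⟩

theorem eLift_mem_span (p : MvPolynomial (Fin n) K) :
    eLift K n p ∈ Submodule.span K (Set.range (avgSPoly K n)) := by
  induction p using MvPolynomial.induction_on' with
  | monomial m a =>
    rw [← mul_one a, ← smul_eq_mul, ← smul_monomial, map_smul]
    refine Submodule.smul_mem _ a ?_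
    by_cases hsq : ∃ i, 2 ≤ m i
    · rw [eLift_eq_zero_of_mem (monomial_one_mem_sqIdeal_iff.2 hsq)]
      exact zero_mem _
    simp only [not_exists, not_le] at hsq
    have hm : m = ∑ i ∈ m.support, Finsupp.single i 1 := by
      ext j
      have := hsq j
      simp only [Finsupp.finsetSum_apply, Finsupp.single_apply, sum_ite_eq',
        Finsupp.mem_support_iff]
      split_ifs <;> omega
    rw [hm, ← prod_X_eq_monomial, prod_X_eq_neg_one_pow_mul_sPoly]
    rcases neg_one_pow_eq_or (MvPolynomial (Fin n) K) (∑ i ∈ m.support, (i : ℕ)) with h | h <;>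
      simp only [h, one_mul, neg_one_mul, map_neg]
    · exact eLift_sPoly_mem_span _
    · exact neg_mem (eLift_sPoly_mem_span _)
  | add p q hp hq =>
    rw [map_add]
    exact add_mem hp hq

theorem range_eLift [CharZero K] :
    LinearMap.range (eLift K n) = Subalgebra.toSubmodule (Algebra.adjoin K {zAlt K n}) := by
  set V := Submodule.span K (Set.range (avgSPoly K n))
  have hadjoin :
      Subalgebra.toSubmodule (Algebra.adjoin K {zAlt K n}) ≤ LinearMap.range (eLift K n) := by
    intro a ha
    obtain ⟨p, hp⟩ := Ideal.Quotient.mk_surjective a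
    exact ⟨p, eLift_eq_of_mem_adjoin ha hp⟩
  have hrange : LinearMap.range (eLift K n) ≤ V := by
    rintro _ ⟨p, rfl⟩
    exact eLift_mem_span p
  have : FiniteDimensional K V := FiniteDimensional.span_of_finite K (Set.finite_range _)
  have hV : Subalgebra.toSubmodule (Algebra.adjoin K {zAlt K n}) = V := by
    refine Submodule.eq_of_le_of_finrank_le (hadjoin.trans hrange) ?_
    rw [Subalgebra.finrank_toSubmodule, finrank_adjoin_zAlt]
    exact (finrank_range_le_card (R := K) (ι := Fin (n + 1)) _).trans_eq (Fintype.card_fin _)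
  exact le_antisymm (hV ▸ hrange) hadjoin

end SignedPermutations

theorem statement14 (K : Type*) [Field K] [CharZero K] (n : ℕ) :
    (∀ a ∈ Algebra.adjoin K {zAlt K n}, ∀ p : MvPolynomial (Fin n) K,
        Ideal.Quotient.mk (sqIdeal K n) p = a → eLift K n p = a) ∧
    LinearMap.range (eLift K n) =
      Subalgebra.toSubmodule (Algebra.adjoin K {zAlt K n}) ∧
    Module.finrank K (LinearMap.range (eLift K n)) = n + 1 := by
  refine ⟨fun a ha p hp => eLift_eq_of_mem_adjoin ha hp, range_eLift, ?_⟩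
  rw [range_eLift, Subalgebra.finrank_toSubmodule, finrank_adjoin_zAlt]
end

section
/- Let B be the set of 'standard' dotted cap diagrams on m+n points: planar perfect matchings of {1,…,m+n} by non-crossing arcs, each arc either dotted or undotted, such that every dotted arc is adjacent to the unbounded region (no dotted arc nested under another arc) — evaluated as linear functionals on A = K[x₁,…,x_{m+n}]/(xᵢ²) by sending each undotted cap {a<b} to the functional x_a ↦ 1, x_b ↦ 1, 1 ↦ 0, x_a x_b ↦ 0, and each dotted cap to the functional 1 ↦ 1, x_a ↦ 0, x_b ↦ 0 on its two tensor factors. Then these functionals are linearly independent in the dual of A. -/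
/-!
Attach to a standard diagram `D` the set `S_D` of left ends of its undotted arcs. Then
`D(x_{S_D}) = 1`, and if `D'(x_{S_D}) ≠ 0`, every undotted arc of `D'` has exactly one end in
`S_D`, which matches the left ends of `D'` with `S_D` by moving points weakly to the right; so
the sum of the left ends of `D'` is smaller than that of `D` unless `S_{D'} = S_D`. Finally a
standard diagram is determined by `S_D`: the arc starting at the last point of `S_D` (at the
first point if `S_D = ∅`) has no point under it, so it is the same in any two diagrams with
the same `S_D`, and one removes it and inducts. Thus the pairing of diagrams with the
monomials `x_{S_D}` is unitriangular.
-/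

/-- A standard dotted cap diagram on `N` boundary points. -/
structure CapDiagram (N : ℕ) where
  /-- the arcs, recorded as pairs `(a, b)` with `a < b` -/
  arcs : Finset (Fin N × Fin N)
  /-- the subset of dotted arcs -/
  dotted : Finset (Fin N × Fin N)
  lt : ∀ p ∈ arcs, p.1 < p.2
  /-- perfect matching: every point lies on exactly one arc -/
  matching : ∀ i : Fin N, ∃! p, p ∈ arcs ∧ (p.1 = i ∨ p.2 = i)
  /-- planarity: arcs do not cross -/
  noncross : ∀ p ∈ arcs, ∀ q ∈ arcs, ¬(p.1 < q.1 ∧ q.1 < p.2 ∧ p.2 < q.2)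
  dotted_sub : dotted ⊆ arcs
  /-- every dot is adjacent to the unbounded region: no dotted arc is nested
  under another arc -/
  no_nested_dot : ∀ p ∈ dotted, ∀ q ∈ arcs, ¬(q.1 < p.1 ∧ p.2 < q.2)

/-- The value of the functional attached to the diagram `D` on the square-free
monomial `x_S`: the product over arcs of the cap values. -/
def capEval (K : Type*) [Field K] {N : ℕ} (D : CapDiagram N) (S : Finset (Fin N)) : K :=
  ∏ p ∈ D.arcs,
    if p ∈ D.dotted then (if p.1 ∉ S ∧ p.2 ∉ S then 1 else 0)
    else (if (p.1 ∈ S ∧ p.2 ∉ S) ∨ (p.1 ∉ S ∧ p.2 ∈ S) then 1 else 0)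

open Finset

theorem linearIndependent_of_triangular {ι α R : Type*} [Ring R] [NoZeroDivisors R]
    {v : ι → α → R} (σ : ι → α) {r : ι → ι → Prop} (hr : WellFounded r)
    (hdiag : ∀ i, v i (σ i) ≠ 0) (htri : ∀ i j, v j (σ i) ≠ 0 → j ≠ i → r j i) :
    LinearIndependent R v := by
  classical
  rw [linearIndependent_iff']
  intro s g hg i
  induction i using hr.induction with
  | _ i ih =>
  intro hi
  have hsum : ∑ j ∈ s, g j * v j (σ i) = 0 := by simpa using congrFun hg (σ i)
  rw [sum_eq_single_of_mem i hi] at hsum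
  · exact (mul_eq_zero.1 hsum).resolve_right (hdiag i)
  · intro j hj hji
    by_cases hv : v j (σ i) = 0
    · rw [hv, mul_zero]
    · rw [ih j (htri i j hv hji) hj, zero_mul]

namespace CapDiagram

variable {N : ℕ}

/-- The conditions of `CapDiagram` relative to a point set `V`, so that arcs can be removed
one at a time. -/
structure IsStandardOn (V : Finset (Fin N)) (arcs dotted : Finset (Fin N × Fin N)) : Prop where
  lt : ∀ p ∈ arcs, p.1 < p.2
  mem : ∀ p ∈ arcs, p.1 ∈ V ∧ p.2 ∈ V
  matching : ∀ i ∈ V, ∃! p, p ∈ arcs ∧ (p.1 = i ∨ p.2 = i)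
  noncross : ∀ p ∈ arcs, ∀ q ∈ arcs, ¬(p.1 < q.1 ∧ q.1 < p.2 ∧ p.2 < q.2)
  dotted_sub : dotted ⊆ arcs
  no_nested_dot : ∀ p ∈ dotted, ∀ q ∈ arcs, ¬(q.1 < p.1 ∧ p.2 < q.2)

def leftEndsOf (arcs dotted : Finset (Fin N × Fin N)) : Finset (Fin N) :=
  (arcs \ dotted).image Prod.fst

theorem leftEndsOf_eq_empty {a d : Finset (Fin N × Fin N)} : leftEndsOf a d = ∅ ↔ a ⊆ d := by
  simp [leftEndsOf, sdiff_eq_empty_iff_subset]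

namespace IsStandardOn

variable {V : Finset (Fin N)} {a d a' d' : Finset (Fin N × Fin N)} {p q : Fin N × Fin N}

theorem eq_of_endpoint (h : IsStandardOn V a d) (hp : p ∈ a) (hq : q ∈ a) {i : Fin N}
    (hpi : p.1 = i ∨ p.2 = i) (hqi : q.1 = i ∨ q.2 = i) : p = q := by
  have hiV : i ∈ V := by rcases hpi with rfl | rfl <;> simp [h.mem p hp]
  exact (h.matching i hiV).unique ⟨hp, hpi⟩ ⟨hq, hqi⟩

theorem endpoints_ne (h : IsStandardOn V a d) (hp : p ∈ a) (hq : q ∈ a) (hpq : p ≠ q) :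
    p.1 ≠ q.1 ∧ p.1 ≠ q.2 ∧ p.2 ≠ q.1 ∧ p.2 ≠ q.2 := by
  refine ⟨fun he => ?_, fun he => ?_, fun he => ?_, fun he => ?_⟩
  · exact hpq (h.eq_of_endpoint hp hq (Or.inl he) (Or.inl rfl))
  · exact hpq (h.eq_of_endpoint hp hq (Or.inl he) (Or.inr rfl))
  · exact hpq (h.eq_of_endpoint hp hq (Or.inr he) (Or.inl rfl))
  · exact hpq (h.eq_of_endpoint hp hq (Or.inr he) (Or.inr rfl))

theorem nested_of_between (h : IsStandardOn V a d) (hp : p ∈ a) (hq : q ∈ a) {v : Fin N}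
    (hqv : q.1 = v ∨ q.2 = v) (hv : p.1 < v ∧ v < p.2) : p.1 < q.1 ∧ q.2 < p.2 := by
  have hpq : p ≠ q := by rintro rfl; rcases hqv with rfl | rfl <;> simp at hv
  have := h.endpoints_ne hp hq hpq
  have := h.lt q hq
  have := h.noncross p hp q hq
  have := h.noncross q hq p hp
  rcases hqv with rfl | rfl <;> grind

theorem not_between (h : IsStandardOn V a d) (hp : p ∈ a)
    (hmax : ∀ x ∈ leftEndsOf a d, x ≤ p.1) : ∀ v ∈ V, ¬(p.1 < v ∧ v < p.2) := by
  intro v hv hbetween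
  obtain ⟨q, ⟨hq, hqv⟩, -⟩ := h.matching v hv
  have hnest := h.nested_of_between hp hq hqv hbetween
  by_cases hqd : q ∈ d
  · exact h.no_nested_dot q hqd p hp hnest
  · exact (hmax q.1 (mem_image_of_mem _ (mem_sdiff.2 ⟨hq, hqd⟩))).not_gt hnest.1

theorem eq_of_fst_eq (h : IsStandardOn V a d) (h' : IsStandardOn V a' d')
    (hl : leftEndsOf a d = leftEndsOf a' d') (hp : p ∈ a) (hq : q ∈ a') (hpq : p.1 = q.1)
    (hmax : ∀ x ∈ leftEndsOf a d, x ≤ p.1) : p = q := by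
  have hp' := h.not_between hp hmax
  have hq' := h'.not_between hq (hl ▸ hpq ▸ hmax)
  refine Prod.ext hpq (le_antisymm (not_lt.1 fun hlt => ?_) (not_lt.1 fun hlt => ?_))
  · exact hp' q.2 (h'.mem q hq).2 ⟨hpq ▸ h'.lt q hq, hlt⟩
  · exact hq' p.2 (h.mem p hp).2 ⟨hpq ▸ h.lt p hp, hlt⟩

theorem exists_fst_eq_min' (h : IsStandardOn V a d) (hV : V.Nonempty) :
    ∃ p ∈ a, p.1 = V.min' hV := by
  obtain ⟨p, ⟨hp, hpi⟩, -⟩ := h.matching _ (V.min'_mem hV)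
  refine ⟨p, hp, hpi.resolve_right fun h2 => ?_⟩
  exact (V.min'_le _ (h.mem p hp).1).not_gt (h2 ▸ h.lt p hp)

theorem exists_common_arc (h : IsStandardOn V a d) (h' : IsStandardOn V a' d')
    (hl : leftEndsOf a d = leftEndsOf a' d') (hV : V.Nonempty) :
    ∃ p ∈ a, p ∈ a' ∧ (p ∈ d ↔ p ∈ d') := by
  rcases (leftEndsOf a d).eq_empty_or_nonempty with hL | hL
  · obtain ⟨p, hp, hp1⟩ := h.exists_fst_eq_min' hV
    obtain ⟨q, hq, hq1⟩ := h'.exists_fst_eq_min' hV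
    obtain rfl := h.eq_of_fst_eq h' hl hp hq (hp1.trans hq1.symm) (by simp [hL])
    exact ⟨p, hp, hq, iff_of_true (leftEndsOf_eq_empty.1 hL hp)
      (leftEndsOf_eq_empty.1 (hl ▸ hL) hq)⟩
  · obtain ⟨p, hp, hp1⟩ := mem_image.1 (max'_mem _ hL)
    obtain ⟨q, hq, hq1⟩ := mem_image.1 (hl.subset (max'_mem _ hL))
    rw [mem_sdiff] at hp hq
    obtain rfl := h.eq_of_fst_eq h' hl hp.1 hq.1 (hp1.trans hq1.symm)
      (fun x hx => hp1 ▸ le_max' _ x hx)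
    exact ⟨p, hp.1, hq.1, iff_of_false hp.2 hq.2⟩

theorem erase (h : IsStandardOn V a d) (hp : p ∈ a) :
    IsStandardOn (V \ {p.1, p.2}) (a.erase p) (d.erase p) where
  lt q hq := h.lt q (mem_of_mem_erase hq)
  mem q hq := by
    obtain ⟨hqp, hq⟩ := mem_erase.1 hq
    have := h.endpoints_ne hq hp hqp
    simp only [mem_sdiff, mem_insert, mem_singleton]
    exact ⟨⟨(h.mem q hq).1, by tauto⟩, ⟨(h.mem q hq).2, by tauto⟩⟩
  matching i hi := by
    simp only [mem_sdiff, mem_insert, mem_singleton, not_or] at hi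
    obtain ⟨q, ⟨hq, hqi⟩, hu⟩ := h.matching i hi.1
    have hqp : q ≠ p := by rintro rfl; rcases hqi with rfl | rfl <;> simp at hi
    exact ⟨q, ⟨mem_erase.2 ⟨hqp, hq⟩, hqi⟩, fun r hr => hu r ⟨mem_of_mem_erase hr.1, hr.2⟩⟩
  noncross q hq r hr := h.noncross q (mem_of_mem_erase hq) r (mem_of_mem_erase hr)
  dotted_sub := erase_subset_erase _ h.dotted_sub
  no_nested_dot q hq r hr := h.no_nested_dot q (mem_of_mem_erase hq) r (mem_of_mem_erase hr)

theorem leftEndsOf_erase (h : IsStandardOn V a d) (hp : p ∈ a) :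
    leftEndsOf (a.erase p) (d.erase p) = (leftEndsOf a d).erase p.1 := by
  ext x
  simp only [leftEndsOf, mem_image, mem_erase, mem_sdiff]
  constructor
  · rintro ⟨q, ⟨⟨hqp, hq⟩, hqd⟩, rfl⟩
    exact ⟨(h.endpoints_ne hq hp hqp).1, q, ⟨hq, fun hd => hqd ⟨hqp, hd⟩⟩, rfl⟩
  · rintro ⟨hx, q, ⟨hq, hqd⟩, rfl⟩
    exact ⟨q, ⟨⟨fun he => hx (he ▸ rfl), hq⟩, fun hd => hqd hd.2⟩, rfl⟩

theorem eq_of_leftEndsOf_eq (h : IsStandardOn V a d) (h' : IsStandardOn V a' d')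
    (hl : leftEndsOf a d = leftEndsOf a' d') : a = a' ∧ d = d' := by
  induction hk : V.card using Nat.strong_induction_on generalizing V a d a' d' with
  | _ k ih =>
  rcases V.eq_empty_or_nonempty with rfl | hV
  · have ha : ∀ {a d : Finset (Fin N × Fin N)}, IsStandardOn ∅ a d → a = ∅ ∧ d = ∅ := fun h => by
      have ha := eq_empty_of_forall_notMem fun p hp => by simpa using (h.mem p hp).1
      exact ⟨ha, subset_empty.1 (ha ▸ h.dotted_sub)⟩
    rw [(ha h).1, (ha h).2, (ha h').1, (ha h').2]
    exact ⟨rfl, rfl⟩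
  obtain ⟨p, hp, hp', hd⟩ := h.exists_common_arc h' hl hV
  have hsub : {p.1, p.2} ⊆ V := by simp [insert_subset_iff, h.mem p hp]
  have hcard : (V \ {p.1, p.2}).card < k := hk ▸ card_lt_card (sdiff_ssubset hsub (by simp))
  obtain ⟨ha, hd'⟩ := ih _ hcard (h.erase hp) (h'.erase hp')
    (by rw [h.leftEndsOf_erase hp, h'.leftEndsOf_erase hp', hl]) rfl
  have eq_of_erase : ∀ {s t : Finset (Fin N × Fin N)}, s.erase p = t.erase p →
      (p ∈ s ↔ p ∈ t) → s = t := fun he hpst => by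
    ext q
    by_cases hq : q = p
    · exact hq ▸ hpst
    · simpa [hq] using congrArg (q ∈ ·) he
  exact ⟨eq_of_erase ha (iff_of_true hp hp'), eq_of_erase hd' hd⟩

end IsStandardOn


variable {K : Type*} [Field K] {D : CapDiagram N} {p : Fin N × Fin N}

theorem isStandardOn_univ (D : CapDiagram N) : IsStandardOn univ D.arcs D.dotted :=
  ⟨D.lt, fun _ _ => ⟨mem_univ _, mem_univ _⟩, fun i _ => D.matching i, D.noncross,
    D.dotted_sub, D.no_nested_dot⟩

theorem ext {D D' : CapDiagram N} (ha : D.arcs = D'.arcs) (hd : D.dotted = D'.dotted) :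
    D = D' := by
  cases D
  cases D'
  subst ha hd
  rfl

def leftEnds (D : CapDiagram N) : Finset (Fin N) := leftEndsOf D.arcs D.dotted

def weight (D : CapDiagram N) : ℕ := ∑ s ∈ D.leftEnds, (s : ℕ)

theorem eq_of_leftEnds_eq {D D' : CapDiagram N} (h : D.leftEnds = D'.leftEnds) : D = D' :=
  let ⟨ha, hd⟩ := D.isStandardOn_univ.eq_of_leftEndsOf_eq D'.isStandardOn_univ h
  ext ha hd

theorem injOn_of_endpoint (D : CapDiagram N) {f : Fin N × Fin N → Fin N}
    (hf : ∀ p, p.1 = f p ∨ p.2 = f p) : Set.InjOn f D.arcs := fun _ hp _ hq he =>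
  D.isStandardOn_univ.eq_of_endpoint hp hq (hf _) (he ▸ hf _)

theorem fst_mem_leftEnds_iff (hp : p ∈ D.arcs) : p.1 ∈ D.leftEnds ↔ p ∉ D.dotted := by
  refine ⟨fun h => ?_, fun hd => mem_image_of_mem _ (mem_sdiff.2 ⟨hp, hd⟩)⟩
  obtain ⟨q, hq, hqp⟩ := mem_image.1 h
  obtain rfl := D.injOn_of_endpoint (f := Prod.fst) (fun _ => Or.inl rfl)
    (mem_sdiff.1 hq).1 hp hqp
  exact (mem_sdiff.1 hq).2

theorem snd_notMem_leftEnds (hp : p ∈ D.arcs) : p.2 ∉ D.leftEnds := fun h => by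
  obtain ⟨q, hq, hqp⟩ := mem_image.1 h
  obtain rfl := D.isStandardOn_univ.eq_of_endpoint (mem_sdiff.1 hq).1 hp (Or.inl hqp)
    (Or.inr rfl)
  exact (D.lt q (mem_sdiff.1 hq).1).ne hqp

theorem capEval_leftEnds (D : CapDiagram N) : capEval K D D.leftEnds = 1 :=
  prod_eq_one fun p hp => by
    by_cases hd : p ∈ D.dotted <;> simp [hd, fst_mem_leftEnds_iff hp, snd_notMem_leftEnds hp]

theorem notMem_of_capEval_ne_zero {S : Finset (Fin N)} (h : capEval K D S ≠ 0)
    (hd : p ∈ D.dotted) : p.1 ∉ S ∧ p.2 ∉ S := by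
  have := prod_ne_zero_iff.1 h p (D.dotted_sub hd)
  simp only [hd, if_true] at this
  by_contra hS
  exact this (if_neg hS)

theorem fst_mem_iff_of_capEval_ne_zero {S : Finset (Fin N)} (h : capEval K D S ≠ 0)
    (hp : p ∈ D.arcs) (hd : p ∉ D.dotted) : p.1 ∈ S ↔ p.2 ∉ S := by
  have := prod_ne_zero_iff.1 h p hp
  simp only [hd, if_false] at this
  by_contra hS
  exact this (if_neg (by tauto))

def endpointIn (S : Finset (Fin N)) (p : Fin N × Fin N) : Fin N := if p.1 ∈ S then p.1 else p.2

theorem endpointIn_eq (S : Finset (Fin N)) (p : Fin N × Fin N) :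
    p.1 = endpointIn S p ∨ p.2 = endpointIn S p := by
  unfold endpointIn
  split_ifs <;> simp

theorem image_endpointIn {S : Finset (Fin N)} (h : capEval K D S ≠ 0) :
    (D.arcs \ D.dotted).image (endpointIn S) = S := by
  ext s
  simp only [mem_image, mem_sdiff]
  constructor
  · rintro ⟨p, ⟨hp, hd⟩, rfl⟩
    have := fst_mem_iff_of_capEval_ne_zero h hp hd
    unfold endpointIn
    split_ifs <;> tauto
  · intro hs
    obtain ⟨p, ⟨hp, hps⟩, -⟩ := D.matching s
    have hd : p ∉ D.dotted := fun hd => by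
      have := notMem_of_capEval_ne_zero h hd
      rcases hps with rfl | rfl <;> tauto
    have := fst_mem_iff_of_capEval_ne_zero h hp hd
    refine ⟨p, ⟨hp, hd⟩, ?_⟩
    unfold endpointIn
    rcases hps with rfl | rfl <;> simp_all

/-- If `D` does not vanish on `x_S`, then `endpointIn S` matches the undotted arcs of `D`
bijectively with `S`, and each left end lies weakly left of its partner in `S`. -/
theorem weight_lt_of_capEval_ne_zero {S : Finset (Fin N)} (h : capEval K D S ≠ 0)
    (hS : D.leftEnds ≠ S) : D.weight < ∑ s ∈ S, (s : ℕ) := by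
  have hU := image_endpointIn h
  have hinj : ∀ f : Fin N × Fin N → Fin N, (∀ p, p.1 = f p ∨ p.2 = f p) →
      Set.InjOn f ↑(D.arcs \ D.dotted) := fun f hf =>
    (D.injOn_of_endpoint hf).mono (by simp)
  rw [weight, leftEnds, leftEndsOf, sum_image (hinj _ fun _ => Or.inl rfl), ← hU,
    sum_image (hinj _ (endpointIn_eq S))]
  have hle : ∀ p ∈ D.arcs \ D.dotted, (p.1 : ℕ) ≤ endpointIn S p := fun p hp => by
    unfold endpointIn
    split_ifs
    exacts [le_rfl, (D.lt p (mem_sdiff.1 hp).1).le]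
  obtain ⟨p, hp, hlt⟩ : ∃ p ∈ D.arcs \ D.dotted, (p.1 : ℕ) < endpointIn S p := by
    by_contra! hge
    exact hS (hU ▸ image_congr fun p hp => Fin.ext (le_antisymm (hle p hp) (hge p hp)))
  exact sum_lt_sum hle ⟨p, hp, hlt⟩

end CapDiagram

theorem statement19_general (K : Type*) [Field K] (m n : ℕ) :
    LinearIndependent K
      (fun D : CapDiagram (m + n) => (fun S : Finset (Fin (m + n)) => capEval K D S)) :=
  linearIndependent_of_triangular CapDiagram.leftEnds (measure CapDiagram.weight).wf
    (fun D => by simp [CapDiagram.capEval_leftEnds])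
    (fun D₀ D h hne => CapDiagram.weight_lt_of_capEval_ne_zero h
      fun hS => hne (CapDiagram.eq_of_leftEnds_eq hS))

theorem statement19 (K : Type*) [Field K] [CharZero K] (m n : ℕ) :
    LinearIndependent K
      (fun D : CapDiagram (m + n) => (fun S : Finset (Fin (m + n)) => capEval K D S)) :=
  statement19_general K m n
end
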